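/- arXiv:1006.1941 — 3 statements merged into one kernel-verified Lean document; each statement's English description precedes it below -/
import Mathlib

section
/- For bounded linear operators A, B on a complex Hilbert space H and t > 0, equality holds in |A - B|² ≤ (1+t)|A|² + (1 + 1/t)|B|² if and only if tA + B = 0. -/
variable {H : Type*} [NormedAddCommGroup H] [InnerProductSpace ℂ H] [CompleteSpace H]

/-- The absolute value `|A| = (A*A)^{1/2}` of a bounded operator. -/
noncomputable def opAbs (A : H →L[ℂ] H) : H →L[ℂ] H := CFC.sqrt (star A * A)

/-- `A = U|A|` is the (canonical) polar decomposition of `A`: `U` is a partial isometry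
whose kernel equals the kernel of `A` (so that `U*U` is the projection onto `(ker A)ᗮ`). -/
def IsPolarDecomp (A U : H →L[ℂ] H) : Prop :=
  A = U * opAbs A ∧ U * star U * U = U ∧ LinearMap.ker (U : H →ₗ[ℂ] H) = LinearMap.ker (A : H →ₗ[ℂ] H)

/-! The gap between the two sides is `t⁻¹ |tA + B|²`, and in a C⋆-ring `c⋆c = 0` forces
`c = 0`. -/

theorem opAbs_sq (C : H →L[ℂ] H) : opAbs C ^ 2 = star C * C :=
  CFC.sq_sqrt (star C * C) (star_mul_self_nonneg C)

section StarAlgebra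

variable {R : Type*}

theorem smul_star_mul_self_add_smul_star_mul_self_eq [NonUnitalRing R] [StarRing R] [Module ℝ R]
    [StarModule ℝ R] [IsScalarTower ℝ R R] [SMulCommClass ℝ R R] (a b : R) {t : ℝ} (ht : t ≠ 0) :
    (1 + t) • (star a * a) + (1 + 1 / t) • (star b * b) =
      star (a - b) * (a - b) + t⁻¹ • (star (t • a + b) * (t • a + b)) := by
  simp only [star_add, star_smul, star_sub, star_trivial, add_mul, mul_add, sub_mul, mul_sub,
    smul_mul_assoc, mul_smul_comm, smul_add, smul_smul]
  match_scalars <;> field_simp <;> ring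

theorem star_sub_mul_sub_eq_smul_add_smul_iff [NonUnitalNormedRing R] [StarRing R] [CStarRing R]
    [Module ℝ R] [StarModule ℝ R] [IsScalarTower ℝ R R] [SMulCommClass ℝ R R]
    (a b : R) {t : ℝ} (ht : t ≠ 0) :
    star (a - b) * (a - b) = (1 + t) • (star a * a) + (1 + 1 / t) • (star b * b) ↔
      t • a + b = 0 := by
  rw [smul_star_mul_self_add_smul_star_mul_self_eq a b ht, left_eq_add, smul_eq_zero,
    CStarRing.star_mul_self_eq_zero_iff]
  simp [ht]

end StarAlgebra

theorem opAbs_sub_sq_eq_iff (A B : H →L[ℂ] H) (t : ℝ) (ht : 0 < t) :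
    opAbs (A - B) ^ 2 = (1 + t) • opAbs A ^ 2 + (1 + 1 / t) • opAbs B ^ 2 ↔
      t • A + B = 0 := by
  simp only [opAbs_sq]
  exact star_sub_mul_sub_eq_smul_add_smul_iff A B ht.ne'
end

section
/- Let A, B be bounded operators on a Hilbert space with |A|, |B| invertible, 1/r + 1/s = 1 with r > 1, p ∈ ℝ, and suppose (r−1)(A−B)|A|^{p−1} = B(|A|^{p−1} − |B|^{p−1}). Then |B| ≤ ( (1/r)|A|^{1−p}|B|^{2p}|A|^{1−p} + (1/s)|A|² )^{1/2}. -/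
/-!
Multiplying the hypothesis on the right by `|A|^{1-p}` shows that `B` is the convex combination
`(1/r) X + (1/s) A` with `X = B |B|^{p-1} |A|^{1-p}`. The square is operator convex (the defect
`t(1-t) (x - y)* (x - y)` is positive), so `B*B ≤ (1/r) X*X + (1/s) A*A`, and
`X*X = |A|^{1-p} |B|^{2p} |A|^{1-p}`. Operator monotonicity of the square root finishes the proof.
-/

set_option synthInstance.maxHeartbeats 400000

variable {H : Type*} [NormedAddCommGroup H] [InnerProductSpace ℂ H] [CompleteSpace H]

section Convexity

variable {A : Type*} [Ring A] [StarRing A] [PartialOrder A] [StarOrderedRing A]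
  [Algebra ℝ A] [StarModule ℝ A]

lemma smul_star_mul_self_nonneg {c : ℝ} (hc : 0 ≤ c) (z : A) : 0 ≤ c • (star z * z) := by
  have h := star_mul_self_nonneg (√c • z)
  rwa [star_smul, star_trivial, smul_mul_smul_comm, Real.mul_self_sqrt hc] at h

lemma star_convexCombo_mul_self_le {t : ℝ} (ht₀ : 0 ≤ t) (ht₁ : t ≤ 1) (x y : A) :
    star (t • x + (1 - t) • y) * (t • x + (1 - t) • y)
      ≤ t • (star x * x) + (1 - t) • (star y * y) := by
  have key : t • (star x * x) + (1 - t) • (star y * y)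
      - star (t • x + (1 - t) • y) * (t • x + (1 - t) • y)
      = (t * (1 - t)) • (star (x - y) * (x - y)) := by
    simp only [star_add, star_smul, star_sub, star_trivial, add_mul, mul_add, sub_mul, mul_sub,
      smul_mul_assoc, mul_smul_comm]
    module
  exact sub_nonneg.mp (key ▸ smul_star_mul_self_nonneg (by nlinarith) _)

end Convexity

lemma eq_inv_smul_add_of_smul_sub_mul {R : Type*} [Ring R] [Algebra ℝ R] {a b p p' q : R} {r : ℝ}
    (hr : r ≠ 0) (hp : p * p' = 1) (h : (r - 1) • ((a - b) * p) = b * (p - q)) :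
    b = r⁻¹ • (b * (q * p')) + (1 - r⁻¹) • a := by
  have h' : (r - 1) • (a - b) = b - b * (q * p') := by
    simpa only [smul_mul_assoc, sub_mul, mul_sub, mul_assoc, hp, mul_one] using congrArg (· * p') h
  rw [show b * (q * p') = b - (r - 1) • (a - b) by rw [h']; abel]
  match_scalars <;> field_simp <;> ring

section Conjugation

variable {A : Type*} [CStarAlgebra A] [PartialOrder A] [StarOrderedRing A]

lemma rpow_sub_one_mul_sq_mul_rpow_sub_one {c : A} (hc : IsUnit c) (hc₀ : 0 ≤ c) (p : ℝ) :
    c ^ (p - 1) * (c ^ 2 * c ^ (p - 1)) = c ^ (2 * p) := by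
  rw [← CFC.rpow_natCast c 2, ← CFC.rpow_add hc, ← CFC.rpow_add hc]
  congr 1
  push_cast
  ring

lemma star_mul_self_mul_rpow {b c d : A} (hc : IsUnit c) (hc₀ : 0 ≤ c) (hbc : star b * b = c ^ 2)
    (hd : IsSelfAdjoint d) (p : ℝ) :
    star (b * (c ^ (p - 1) * d)) * (b * (c ^ (p - 1) * d)) = d * c ^ (2 * p) * d := by
  have hsc : IsSelfAdjoint (c ^ (p - 1)) := .of_nonneg CFC.rpow_nonneg
  rw [star_mul, star_mul, hsc.star_eq, hd.star_eq, ← rpow_sub_one_mul_sq_mul_rpow_sub_one hc hc₀ p,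
    ← hbc]
  simp only [mul_assoc]

end Conjugation

lemma star_mul_self_eq_opAbs_sq (A : H →L[ℂ] H) : star A * A = opAbs A ^ 2 :=
  (CFC.sq_sqrt _ (star_mul_self_nonneg A)).symm

theorem equality_consequence_two (A B : H →L[ℂ] H)
    (hA : IsUnit (opAbs A)) (hB : IsUnit (opAbs B))
    (r s : ℝ) (hr : 1 < r) (hrs : 1 / r + 1 / s = 1) (p : ℝ)
    (h : (r - 1) • ((A - B) * CFC.rpow (opAbs A) (p - 1))
        = B * (CFC.rpow (opAbs A) (p - 1) - CFC.rpow (opAbs B) (p - 1))) :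
    opAbs B ≤ CFC.sqrt ((1 / r) • (CFC.rpow (opAbs A) (1 - p) * CFC.rpow (opAbs B) (2 * p)
          * CFC.rpow (opAbs A) (1 - p)) + (1 / s) • opAbs A ^ 2) := by
  simp only [CFC.rpow_eq_pow] at h ⊢
  have hs : 1 / s = 1 - r⁻¹ := by rw [← one_div]; linarith
  have hinv : opAbs A ^ (p - 1) * opAbs A ^ (1 - p) = 1 := by
    rw [← CFC.rpow_add hA, sub_add_sub_cancel', sub_self, CFC.rpow_zero _ (CFC.sqrt_nonneg _)]
  set X := B * (opAbs B ^ (p - 1) * opAbs A ^ (1 - p))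
  have hB_eq : B = r⁻¹ • X + (1 - r⁻¹) • A :=
    eq_inv_smul_add_of_smul_sub_mul (by positivity) hinv h
  have hX : star X * X = opAbs A ^ (1 - p) * opAbs B ^ (2 * p) * opAbs A ^ (1 - p) :=
    star_mul_self_mul_rpow hB (CFC.sqrt_nonneg _) (star_mul_self_eq_opAbs_sq B)
      (.of_nonneg CFC.rpow_nonneg) p
  refine CFC.sqrt_le_sqrt _ _ ?_
  calc star B * B = star (r⁻¹ • X + (1 - r⁻¹) • A) * (r⁻¹ • X + (1 - r⁻¹) • A) := by
        rw [← hB_eq]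
    _ ≤ r⁻¹ • (star X * X) + (1 - r⁻¹) • (star A * A) :=
        star_convexCombo_mul_self_le (by positivity) (inv_le_one_of_one_le₀ hr.le) X A
    _ = _ := by rw [hX, star_mul_self_eq_opAbs_sq, hs, one_div]
end

section
/- Let S and T be positive bounded operators on a Hilbert space satisfying ST + TS = rS² for some real number r. Then: (i) if r < 0, then S = 0; (ii) if r ≥ 0, then S and T commute. -/
/-!
Multiplying `ST + TS = rS²` by `S` on the left and on the right gives the same operator `rS³`,
so `S²` commutes with `T`, and then so does `S = √(S²)`. For commuting positive operators `ST ≥ 0`,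
so `2ST = rS²` is both positive and, when `r < 0`, negative; hence `S² = 0` and `S = 0`.
-/

variable {H : Type*} [NormedAddCommGroup H] [InnerProductSpace ℂ H] [CompleteSpace H]

theorem commute_sq_of_commute_mul_add_mul {R : Type*} [Ring R] {a b : R}
    (h : Commute a (a * b + b * a)) : Commute (a ^ 2) b := by
  have key : a ^ 2 * b - b * a ^ 2 = a * (a * b + b * a) - (a * b + b * a) * a := by
    noncomm_ring
  rwa [h.eq, sub_self, sub_eq_zero] at key

section CStarAlgebra

variable {A : Type*} [CStarAlgebra A] [PartialOrder A] [StarOrderedRing A]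

theorem Commute.of_sq_left {a b : A} (ha : 0 ≤ a) (h : Commute (a ^ 2) b) : Commute a b := by
  rw [← CFC.sqrt_sq a, CFC.sqrt_eq_cfc]
  exact h.cfc_nnreal _

theorem eq_zero_of_mul_add_mul_eq_smul_sq {a b : A} {r : ℝ} (ha : 0 ≤ a) (hb : 0 ≤ b)
    (hab : Commute a b) (hr : r < 0) (h : a * b + b * a = r • a ^ 2) : a = 0 := by
  have hsmul_nonneg : 0 ≤ r • a ^ 2 := by
    rw [← h, ← hab.eq]
    exact add_nonneg (hab.mul_nonneg ha hb) (hab.mul_nonneg ha hb)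
  have hsmul_nonpos : r • a ^ 2 ≤ 0 :=
    smul_nonpos_of_nonpos_of_nonneg hr.le ha.isSelfAdjoint.sq_nonneg
  have hsq : a ^ 2 = 0 :=
    (smul_eq_zero.mp (le_antisymm hsmul_nonpos hsmul_nonneg)).resolve_left hr.ne
  rw [← CFC.sqrt_sq a, hsq, CFC.sqrt_zero]

end CStarAlgebra

theorem positive_anticommutator (S T : H →L[ℂ] H)
    (hS : 0 ≤ S) (hT : 0 ≤ T) (r : ℝ) (h : S * T + T * S = r • S ^ 2) :
    (r < 0 → S = 0) ∧ (0 ≤ r → Commute S T) := by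
  have hS2T : Commute (S ^ 2) T :=
    commute_sq_of_commute_mul_add_mul (h ▸ (Commute.self_pow S 2).smul_right r)
  have hST : Commute S T := hS2T.of_sq_left hS
  exact ⟨fun hr => eq_zero_of_mul_add_mul_eq_smul_sq hS hT hST hr h, fun _ => hST⟩
end
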